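/- Let t > 0 be real and let r > 0 satisfy t · r · exp(√(1 + r²)) / (1 + √(1 + r²)) = 1, where √ is the real square root. Then for every z ∈ ℂ with |z| < r, the Kapteyn series ∑_{n=1}^∞ t^n · J_n(n·z) is summable. -/

import Mathlib

/-!
Splitting `(c/2)^{n+2j} = (c/(2a))^n · a^{n+j} · (c²/(4a))^j` bounds the Bessel series termwise by
a sub-series of the Cauchy product of two exponential series, so `|J_n(w)| ≤ (|w|/(2a))^n e^{a + |w|²/(4a)}`
for every `a > 0`. For `w = n z` the optimal choice `a = n(1 + √(1+|z|²))/2` gives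
`|J_n(n z)| ≤ K(|z|)^n` with `K(s) = s e^{√(1+s²)} / (1 + √(1+s²))`. Since `K` is strictly increasing
and `t K(r) = 1`, the Kapteyn series is dominated by a geometric series of ratio `t K(|z|) < 1`.
-/

/-- The Bessel function of the first kind of (integer) order `n`,
defined by its everywhere-convergent power series. -/
noncomputable def besselJ (n : ℕ) (z : ℂ) : ℂ :=
  ∑' j : ℕ, ((-1 : ℂ) ^ j / ((Nat.factorial j : ℂ) * (Nat.factorial (n + j) : ℂ))) *
    (z / 2) ^ (n + 2 * j)

open Real

lemma hasSum_pow_div_factorial_exp (x : ℝ) :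
    HasSum (fun n : ℕ => x ^ n / n.factorial) (exp x) := by
  rw [exp_eq_exp_ℝ]
  exact NormedSpace.expSeries_div_hasSum_exp x

section ShiftedProduct

variable {f g : ℕ → ℝ}

lemma summable_mul_shift (hf : Summable f) (hg : Summable g) (hf0 : 0 ≤ f) (hg0 : 0 ≤ g)
    (n : ℕ) : Summable fun j => f (n + j) * g j :=
  (hf.mul_of_nonneg hg hf0 hg0).comp_injective (i := fun j => (n + j, j))
    fun _ _ h => (Prod.ext_iff.1 h).2

lemma tsum_mul_shift_le (hf : Summable f) (hg : Summable g) (hf0 : 0 ≤ f) (hg0 : 0 ≤ g)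
    (n : ℕ) : ∑' j, f (n + j) * g j ≤ (∑' k, f k) * ∑' k, g k := by
  have hfg := hf.mul_of_nonneg hg hf0 hg0
  rw [hf.tsum_mul_tsum hg hfg]
  exact (summable_mul_shift hf hg hf0 hg0 n).tsum_le_tsum_of_inj (fun j => (n + j, j))
    (fun _ _ h => (Prod.ext_iff.1 h).2) (fun p _ => mul_nonneg (hf0 _) (hg0 _))
    (fun _ => le_rfl) hfg

end ShiftedProduct

lemma norm_besselJ_term (n j : ℕ) (w : ℂ) :
    ‖(-1 : ℂ) ^ j / ((j.factorial : ℂ) * ((n + j).factorial : ℂ)) * (w / 2) ^ (n + 2 * j)‖ =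
      (‖w‖ / 2) ^ (n + 2 * j) / ((j.factorial : ℝ) * ((n + j).factorial : ℝ)) := by
  simp [div_eq_mul_inv, mul_comm]

lemma pow_add_two_mul_eq_of_ne_zero (c : ℝ) {a : ℝ} (ha : a ≠ 0) (n j : ℕ) :
    c ^ (n + 2 * j) = (c / a) ^ n * a ^ (n + j) * (c ^ 2 / a) ^ j := by
  rw [pow_add, pow_mul, div_pow, div_pow, pow_add]
  field_simp

theorem norm_besselJ_le_of_pos (n : ℕ) (w : ℂ) {a : ℝ} (ha : 0 < a) :
    ‖besselJ n w‖ ≤ (‖w‖ / 2 / a) ^ n * exp (a + (‖w‖ / 2) ^ 2 / a) := by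
  set c := ‖w‖ / 2
  set b := c ^ 2 / a
  have hterm : ∀ j : ℕ,
      ‖(-1 : ℂ) ^ j / ((j.factorial : ℂ) * ((n + j).factorial : ℂ)) * (w / 2) ^ (n + 2 * j)‖ =
        (c / a) ^ n * (a ^ (n + j) / (n + j).factorial * (b ^ j / j.factorial)) := by
    intro j
    rw [norm_besselJ_term, pow_add_two_mul_eq_of_ne_zero c ha.ne']
    ring
  have hf0 : 0 ≤ fun k : ℕ => a ^ k / k.factorial := fun k => by positivity
  have hg0 : 0 ≤ fun k : ℕ => b ^ k / k.factorial := fun k => by positivity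
  have hfa := hasSum_pow_div_factorial_exp a
  have hgb := hasSum_pow_div_factorial_exp b
  have hsummable := ((summable_mul_shift hfa.summable hgb.summable hf0 hg0 n).mul_left
    ((c / a) ^ n)).congr fun j => (hterm j).symm
  calc ‖besselJ n w‖ ≤ ∑' j : ℕ, (c / a) ^ n *
        (a ^ (n + j) / (n + j).factorial * (b ^ j / j.factorial)) := by
        simp_rw [← hterm]
        exact norm_tsum_le_tsum_norm hsummable
    _ = (c / a) ^ n * ∑' j : ℕ, a ^ (n + j) / (n + j).factorial * (b ^ j / j.factorial) :=
        tsum_mul_left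
    _ ≤ (c / a) ^ n * (exp a * exp b) := by
        gcongr
        rw [← hfa.tsum_eq, ← hgb.tsum_eq]
        exact tsum_mul_shift_le hfa.summable hgb.summable hf0 hg0 n
    _ = (c / a) ^ n * exp (a + b) := by rw [exp_add]

noncomputable def kapteynRate (s : ℝ) : ℝ :=
  s * exp (√(1 + s ^ 2)) / (1 + √(1 + s ^ 2))

lemma one_le_sqrt_one_add_sq (s : ℝ) : 1 ≤ √(1 + s ^ 2) :=
  Real.one_le_sqrt.2 (by nlinarith [sq_nonneg s])

lemma kapteynRate_nonneg {s : ℝ} (hs : 0 ≤ s) : 0 ≤ kapteynRate s := by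
  have := one_le_sqrt_one_add_sq s
  unfold kapteynRate
  positivity

lemma kapteynRate_strictMonoOn : StrictMonoOn kapteynRate (Set.Ici 0) := by
  intro s (hs : 0 ≤ s) r (hr : 0 ≤ r) hsr
  have hus := one_le_sqrt_one_add_sq s
  have hur := one_le_sqrt_one_add_sq r
  have hus2 : √(1 + s ^ 2) ^ 2 = 1 + s ^ 2 := Real.sq_sqrt (by positivity)
  have hur2 : √(1 + r ^ 2) ^ 2 = 1 + r ^ 2 := Real.sq_sqrt (by positivity)
  have hsqrt : √(1 + s ^ 2) ≤ √(1 + r ^ 2) := Real.sqrt_le_sqrt (by nlinarith)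
  have hcross : s * √(1 + r ^ 2) ≤ r * √(1 + s ^ 2) :=
    (pow_le_pow_iff_left₀ (by positivity) (by positivity) two_ne_zero).1
      (by rw [mul_pow, mul_pow, hus2, hur2]; nlinarith)
  have hfrac : s / (1 + √(1 + s ^ 2)) < r / (1 + √(1 + r ^ 2)) := by
    rw [div_lt_div_iff₀ (by positivity) (by positivity)]
    linarith
  calc kapteynRate s = s / (1 + √(1 + s ^ 2)) * exp √(1 + s ^ 2) := by
        rw [kapteynRate, div_mul_eq_mul_div]
    _ < r / (1 + √(1 + r ^ 2)) * exp √(1 + r ^ 2) :=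
        mul_lt_mul hfrac (exp_le_exp.2 hsqrt) (exp_pos _) (by positivity)
    _ = kapteynRate r := by rw [kapteynRate, div_mul_eq_mul_div]

theorem norm_besselJ_nat_mul_le (n : ℕ) (hn : n ≠ 0) (z : ℂ) :
    ‖besselJ n (n * z)‖ ≤ kapteynRate ‖z‖ ^ n := by
  set s := ‖z‖
  set u := √(1 + s ^ 2)
  have hu : 1 ≤ u := one_le_sqrt_one_add_sq s
  have hu2 : u ^ 2 = 1 + s ^ 2 := Real.sq_sqrt (by positivity)
  have hn_pos : (0 : ℝ) < n := by positivity
  have ha : 0 < n * (1 + u) / 2 := by positivity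
  calc ‖besselJ n (n * z)‖
      ≤ (‖(n : ℂ) * z‖ / 2 / (n * (1 + u) / 2)) ^ n *
          exp (n * (1 + u) / 2 + (‖(n : ℂ) * z‖ / 2) ^ 2 / (n * (1 + u) / 2)) :=
        norm_besselJ_le_of_pos n _ ha
    _ = (s / (1 + u)) ^ n * exp (n * u) := by
        rw [show ‖(n : ℂ) * z‖ = n * s by rw [norm_mul, Complex.norm_natCast]]
        congr 2
        · field_simp
        · field_simp
          nlinarith
    _ = kapteynRate s ^ n := by
        rw [exp_nat_mul, ← mul_pow, kapteynRate]
        ring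

theorem kapteyn_summable_in_disc (t : ℝ) (ht : 0 < t) (r : ℝ)
    (hroot : t * r * Real.exp (Real.sqrt (1 + r ^ 2)) / (1 + Real.sqrt (1 + r ^ 2)) = 1)
    (z : ℂ) (hz : ‖z‖ < r) :
    Summable (fun n : ℕ => (t : ℂ) ^ (n + 1) * besselJ (n + 1) ((n + 1 : ℕ) * z)) := by
  set q := t * kapteynRate ‖z‖
  have hq0 : 0 ≤ q := mul_nonneg ht.le (kapteynRate_nonneg (norm_nonneg z))
  have hq1 : q < 1 :=
    calc q < t * kapteynRate r := mul_lt_mul_of_pos_left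
          (kapteynRate_strictMonoOn (norm_nonneg z) ((norm_nonneg z).trans hz.le) hz) ht
      _ = 1 := by rw [← hroot, kapteynRate]; ring
  refine Summable.of_norm_bounded
    ((summable_geometric_of_lt_one hq0 hq1).comp_injective (add_left_injective 1)) fun n => ?_
  rw [norm_mul, norm_pow, Complex.norm_real, Real.norm_of_nonneg ht.le, Function.comp_apply,
    mul_pow]
  exact mul_le_mul_of_nonneg_left (norm_besselJ_nat_mul_le (n + 1) n.succ_ne_zero z)
    (by positivity)
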